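/- Suppose the vertex set S of Γ decomposes as a disjoint union S = S₁ ⊔ ⋯ ⊔ S_k such that any two vertices lying in different parts are joined in Γ by an edge labelled 2 (so A_Γ ≅ A_{Γ₁} × ⋯ × A_{Γ_k}, where Γ_i is the induced subgraph on S_i). If for every i and every subset T ⊆ S_i the Artin group A_{Γ_T} of the induced subgraph on T satisfies the Intersection Property, then A_Γ satisfies the Intersection Property: the intersection of any two parabolic subgroups of A_Γ is a parabolic subgroup of A_Γ. -/

import Mathlib

/-!
Common framework: Artin groups of labelled graphs.

A finite labelled graph `Γ` on vertex set `α` is encoded by a symmetric function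
`M : α → α → ℕ`, where `M s t = 0` means `s` and `t` are not joined by an edge
(label `∞`), and `M s t = m ≥ 2` means `s, t` are joined by an edge labelled `m`.
-/

namespace ArtinPaper

/-- The word `Π(s,t;m) = stst⋯` (`m` letters) in the free group. -/
def braidWord {α : Type*} (m : ℕ) (s t : α) : FreeGroup α :=
  ((List.range m).map (fun i => if i % 2 = 0 then FreeGroup.of s else FreeGroup.of t)).prod

/-- The Artin relations of the labelled graph `M`: `Π(s,t;m_{s,t}) = Π(t,s;m_{s,t})`
for every edge `{s,t}` (i.e. whenever `2 ≤ M s t`). -/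
def artinRels {α : Type*} (M : α → α → ℕ) : Set (FreeGroup α) :=
  { r | ∃ s t : α, 2 ≤ M s t ∧ r = braidWord (M s t) s t * (braidWord (M s t) t s)⁻¹ }

/-- The Artin group `A_Γ` of the labelled graph `M`. -/
abbrev ArtinGroup {α : Type*} (M : α → α → ℕ) : Type _ :=
  PresentedGroup (artinRels M)

/-- The image in `A_Γ` of the generator `s`. -/
def agen {α : Type*} (M : α → α → ℕ) (s : α) : ArtinGroup M :=
  PresentedGroup.of s

/-- The standard parabolic subgroup `A_T` of `A_Γ`, for `T ⊆ S`. -/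
def standardParabolic {α : Type*} (M : α → α → ℕ) (T : Set α) :
    Subgroup (ArtinGroup M) :=
  Subgroup.closure (agen M '' T)

/-- The conjugate `g H g⁻¹` of a subgroup. -/
def conjSub {G : Type*} [Group G] (g : G) (H : Subgroup G) : Subgroup G :=
  H.map (MulAut.conj g).toMonoidHom

/-- A parabolic subgroup of `A_Γ` is a conjugate `g A_T g⁻¹` of a standard parabolic. -/
def IsParabolic {α : Type*} (M : α → α → ℕ) (H : Subgroup (ArtinGroup M)) : Prop :=
  ∃ (g : ArtinGroup M) (T : Set α), H = conjSub g (standardParabolic M T)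

/-- A subgroup `H ≤ G` is weakly malnormal if some conjugate intersects it in a finite set. -/
def WeaklyMalnormal {G : Type*} [Group G] (H : Subgroup G) : Prop :=
  ∃ g : G, (((H ⊓ conjSub g H : Subgroup G) : Set G)).Finite

/-- `A_Γ` is reducible if `S` is partitioned into two nonempty parts joined entirely
by edges labelled `2`. -/
def IsReducible {α : Type*} (M : α → α → ℕ) : Prop :=
  ∃ S₁ S₂ : Set α, S₁.Nonempty ∧ S₂.Nonempty ∧ Disjoint S₁ S₂ ∧
    S₁ ∪ S₂ = Set.univ ∧ ∀ s ∈ S₁, ∀ t ∈ S₂, M s t = 2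

/-- The labelled graph induced on a subset `T` of the vertices. -/
def restrict {α : Type*} (M : α → α → ℕ) (T : Set α) : T → T → ℕ :=
  fun s t => M s t

/-- An Artin group satisfies the Intersection Property if the intersection of any two
of its parabolic subgroups is again a parabolic subgroup. -/
def SatisfiesIP {α : Type*} (M : α → α → ℕ) : Prop :=
  ∀ H K : Subgroup (ArtinGroup M),
    IsParabolic M H → IsParabolic M K → IsParabolic M (H ⊓ K)

/-- A visual splitting `A_Γ = A_{Γ₁} *_{A_Ω} A_{Γ₂}`: two proper subsets of vertices
covering `S` such that each edge has both endpoints in `S₁` or both in `S₂`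
(here `Ω = S₁ ∩ S₂`). -/
def VisualSplitting {α : Type*} (M : α → α → ℕ) (S₁ S₂ : Set α) : Prop :=
  S₁ ≠ Set.univ ∧ S₂ ≠ Set.univ ∧ S₁ ∪ S₂ = Set.univ ∧
    ∀ s t : α, 2 ≤ M s t → (s ∈ S₁ ∧ t ∈ S₁) ∨ (s ∈ S₂ ∧ t ∈ S₂)

/-- `S₁` spans a direct factor of `A_Γ`: `∅ ≠ S₁ ⊊ S` and every vertex of `S₁` is joined
to every vertex of `S ∖ S₁` by an edge labelled `2`. -/
def IsDirectFactorSet {α : Type*} (M : α → α → ℕ) (S₁ : Set α) : Prop :=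
  S₁.Nonempty ∧ S₁ ≠ Set.univ ∧ ∀ s ∈ S₁, ∀ t ∉ S₁, M s t = 2

/-- The Weak Malnormality Conjecture for `A_Γ`: a proper standard parabolic subgroup
is weakly malnormal iff it does not contain a standard parabolic subgroup that is a
direct factor of `A_Γ`. -/
def SatisfiesWMC {α : Type*} (M : α → α → ℕ) : Prop :=
  ∀ T : Set α, T ≠ Set.univ →
    (WeaklyMalnormal (standardParabolic M T) ↔
      ¬ ∃ S₁ : Set α, IsDirectFactorSet M S₁ ∧
        standardParabolic M S₁ ≤ standardParabolic M T)

/-- The relations of the Coxeter group `W_Γ`: the Artin relations together with `s² = 1`. -/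
def coxeterRels {α : Type*} (M : α → α → ℕ) : Set (FreeGroup α) :=
  artinRels M ∪ { r | ∃ s : α, r = FreeGroup.of s * FreeGroup.of s }

/-- The Coxeter group `W_Γ`, the quotient of `A_Γ` by the relations `s² = 1`. -/
abbrev CoxGroup {α : Type*} (M : α → α → ℕ) : Type _ :=
  PresentedGroup (coxeterRels M)

end ArtinPaper

set_option linter.unusedSectionVars false

namespace ArtinPaper

section Words

variable {G H : Type*} [Monoid G] [Monoid H]

/-- The word `stst⋯` (`m` letters) evaluated in a monoid. -/
private def wp (m : ℕ) (a b : G) : G :=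
  ((List.range m).map (fun i => if i % 2 = 0 then a else b)).prod

private lemma map_wp (φ : G →* H) (m : ℕ) (a b : G) :
    φ (wp m a b) = wp m (φ a) (φ b) := by
  unfold wp
  rw [map_list_prod, List.map_map]
  congr 1
  simp [Function.comp_def, apply_ite]

private lemma wp_two (a b : G) : wp 2 a b = a * b := by
  simp [wp, List.range_succ]

end Words

private lemma braidWord_eq_wp {α : Type*} (m : ℕ) (s t : α) :
    braidWord m s t = wp m (FreeGroup.of s) (FreeGroup.of t) := rfl

private lemma lift_braidWord {α G : Type*} [Group G] (φ : α → G) (m : ℕ) (s t : α) :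
    FreeGroup.lift φ (braidWord m s t) = wp m (φ s) (φ t) := by
  rw [braidWord_eq_wp, map_wp, FreeGroup.lift_apply_of, FreeGroup.lift_apply_of]

private lemma mk_braidWord {α : Type*} (rels : Set (FreeGroup α)) (m : ℕ) (s t : α) :
    PresentedGroup.mk rels (braidWord m s t) =
      wp m (PresentedGroup.of (rels := rels) s) (PresentedGroup.of t) := by
  rw [braidWord_eq_wp, map_wp]
  rfl

private lemma artin_rel {α : Type*} (M : α → α → ℕ) {s t : α} (h : 2 ≤ M s t) :
    wp (M s t) (agen M s) (agen M t) = wp (M s t) (agen M t) (agen M s) := by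
  have hmem : braidWord (M s t) s t * (braidWord (M s t) t s)⁻¹ ∈
      Subgroup.normalClosure (artinRels M) :=
    Subgroup.subset_normalClosure ⟨s, t, h, rfl⟩
  have h1 : PresentedGroup.mk (artinRels M)
      (braidWord (M s t) s t * (braidWord (M s t) t s)⁻¹) = 1 :=
    (QuotientGroup.eq_one_iff _).2 hmem
  rw [map_mul, map_inv, mul_inv_eq_one, mk_braidWord, mk_braidWord] at h1
  exact h1

private lemma agen_comm {α : Type*} (M : α → α → ℕ) {s t : α} (h2 : M s t = 2) :
    Commute (agen M s) (agen M t) := by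
  have h := artin_rel M (le_of_eq h2.symm)
  rw [h2, wp_two, wp_two] at h
  exact h

private lemma commute_closure {G : Type*} [Group G] {S₁ S₂ : Set G}
    (h : ∀ x ∈ S₁, ∀ y ∈ S₂, Commute x y) :
    ∀ x ∈ Subgroup.closure S₁, ∀ y ∈ Subgroup.closure S₂, Commute x y := by
  intro x hx y hy
  have h1 : Subgroup.closure S₁ ≤ Subgroup.centralizer S₂ := by
    rw [Subgroup.closure_le]
    intro a ha
    rw [SetLike.mem_coe, Subgroup.mem_centralizer_iff]
    intro b hb
    exact (h a ha b hb).symm.eq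
  have h2 : Subgroup.closure S₂ ≤ Subgroup.centralizer {x} := by
    rw [Subgroup.closure_le]
    intro b hb
    rw [SetLike.mem_coe, Subgroup.mem_centralizer_iff]
    intro c hc
    rw [Set.mem_singleton_iff] at hc
    subst hc
    exact (Subgroup.mem_centralizer_iff.1 (h1 hx) b hb).symm
  exact Subgroup.mem_centralizer_iff.1 (h2 hy) x rfl

private lemma mem_conjSub {G : Type*} [Group G] {g x : G} {H : Subgroup G} :
    x ∈ conjSub g H ↔ g⁻¹ * x * g ∈ H := by
  simp only [conjSub, Subgroup.mem_map, MulEquiv.coe_toMonoidHom, MulAut.conj_apply]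
  constructor
  · rintro ⟨y, hy, rfl⟩
    have : g⁻¹ * (g * y * g⁻¹) * g = y := by group
    rwa [this]
  · intro hx
    exact ⟨g⁻¹ * x * g, hx, by group⟩

private lemma map_conjSub {G G' : Type*} [Group G] [Group G'] (e : G ≃* G') (g : G)
    (H : Subgroup G) :
    (conjSub g H).map e.toMonoidHom = conjSub (e g) (H.map e.toMonoidHom) := by
  ext x
  have key : e.symm ((e g)⁻¹ * x * e g) = g⁻¹ * e.symm x * g := by
    simp [map_mul, map_inv]
  rw [Subgroup.mem_map_equiv, mem_conjSub, mem_conjSub, Subgroup.mem_map_equiv, key]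

private lemma conjSub_pi {η : Type*} {G : η → Type*} [∀ i, Group (G i)] (g : ∀ i, G i)
    (H : ∀ i, Subgroup (G i)) :
    conjSub g (Subgroup.pi Set.univ H) = Subgroup.pi Set.univ (fun i => conjSub (g i) (H i)) := by
  ext x
  simp [mem_conjSub, Subgroup.mem_pi]

private lemma pi_inf {η : Type*} {G : η → Type*} [∀ i, Group (G i)]
    (H K : ∀ i, Subgroup (G i)) :
    Subgroup.pi Set.univ H ⊓ Subgroup.pi Set.univ K =
      Subgroup.pi Set.univ (fun i => H i ⊓ K i) := by
  ext x
  simp [Subgroup.mem_pi, forall_and]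

end ArtinPaper

namespace ArtinPaper

section Product

variable {α : Type*} (M : α → α → ℕ) {k : ℕ} (f : α → Fin k)

/-- The label matrix of the induced graph on the `i`-th fiber. -/
private abbrev Mi (i : Fin k) : (f ⁻¹' {i} : Set α) → (f ⁻¹' {i} : Set α) → ℕ :=
  restrict M (f ⁻¹' {i})

/-- The target generators in the product group. -/
private def F0 (s : α) : ∀ i, ArtinGroup (Mi M f i) :=
  Pi.mulSingle (f s) (agen (Mi M f (f s)) ⟨s, rfl⟩)

private lemma F0_eq {s : α} {i : Fin k} (h : f s = i) :
    F0 M f s = Pi.mulSingle i (agen (Mi M f i) ⟨s, h⟩) := by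
  subst h; rfl

private lemma F0_rels (hcross : ∀ s t : α, f s ≠ f t → M s t = 2) : ∀ r ∈ artinRels M, FreeGroup.lift (F0 M f) r = 1 := by
  rintro r ⟨s, t, hm, rfl⟩
  rw [map_mul, map_inv, mul_inv_eq_one, lift_braidWord, lift_braidWord]
  by_cases h : f s = f t
  · rw [F0_eq M f (rfl : f s = f s), F0_eq M f (h.symm : f t = f s)]
    have h2 : (2 : ℕ) ≤ Mi M f (f s) ⟨s, rfl⟩ ⟨t, h.symm⟩ := hm
    have key := artin_rel (Mi M f (f s)) h2
    have e1 := map_wp (MonoidHom.mulSingle (fun i => ArtinGroup (Mi M f i)) (f s))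
      (M s t) (agen (Mi M f (f s)) ⟨s, rfl⟩) (agen (Mi M f (f s)) ⟨t, h.symm⟩)
    have e2 := map_wp (MonoidHom.mulSingle (fun i => ArtinGroup (Mi M f i)) (f s))
      (M s t) (agen (Mi M f (f s)) ⟨t, h.symm⟩) (agen (Mi M f (f s)) ⟨s, rfl⟩)
    simp only [MonoidHom.mulSingle_apply] at e1 e2
    rw [← e1, ← e2]
    exact congrArg _ key
  · have h2 : M s t = 2 := hcross s t h
    rw [h2, wp_two, wp_two]
    exact Pi.mulSingle_commute h _ _

variable (hcross : ∀ s t : α, f s ≠ f t → M s t = 2) in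
/-- The homomorphism `A_Γ →* ∏ᵢ A_{Γᵢ}`. -/
private def Phi : ArtinGroup M →* ∀ i, ArtinGroup (Mi M f i) :=
  PresentedGroup.toGroup (F0_rels M f hcross)

private lemma Phi_agen (hcross : ∀ s t : α, f s ≠ f t → M s t = 2) (s : α) : Phi M f hcross (agen M s) = F0 M f s :=
  PresentedGroup.toGroup.of _

private lemma gen_rels (i : Fin k) : ∀ r ∈ artinRels (Mi M f i),
    FreeGroup.lift (fun s : (f ⁻¹' {i} : Set α) => agen M ↑s) r = 1 := by
  rintro r ⟨s, t, hm, rfl⟩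
  rw [map_mul, map_inv, mul_inv_eq_one, lift_braidWord, lift_braidWord]
  exact artin_rel M (hm : 2 ≤ M ↑s ↑t)

/-- The homomorphism `A_{Γᵢ} →* A_Γ`. -/
private def Psi0 (i : Fin k) : ArtinGroup (Mi M f i) →* ArtinGroup M :=
  PresentedGroup.toGroup (gen_rels M f i)

private lemma Psi0_agen (i : Fin k) (s : (f ⁻¹' {i} : Set α)) :
    Psi0 M f i (agen (Mi M f i) s) = agen M ↑s :=
  PresentedGroup.toGroup.of _

private lemma Psi0_mem (i : Fin k) (x : ArtinGroup (Mi M f i)) :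
    Psi0 M f i x ∈ Subgroup.closure (agen M '' (f ⁻¹' {i})) := by
  have hx : x ∈ Subgroup.closure
      (Set.range (PresentedGroup.of : (f ⁻¹' {i} : Set α) → ArtinGroup (Mi M f i))) := by
    rw [PresentedGroup.closure_range_of]; trivial
  have h2 := Subgroup.mem_map_of_mem (Psi0 M f i) hx
  rw [MonoidHom.map_closure] at h2
  have him : (Psi0 M f i) '' Set.range (PresentedGroup.of) = agen M '' (f ⁻¹' {i}) := by
    rw [← Set.range_comp]
    have : (Psi0 M f i) ∘ (PresentedGroup.of) = (agen M) ∘ (Subtype.val) := by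
      funext s; exact Psi0_agen M f i s
    rw [this, Set.range_comp, Subtype.range_coe]
  rwa [him] at h2

private lemma Psi_comm (hcross : ∀ s t : α, f s ≠ f t → M s t = 2) : Pairwise fun i j =>
    ∀ x y, Commute (Psi0 M f i x) (Psi0 M f j y) := by
  intro i j hij x y
  refine commute_closure ?_ _ (Psi0_mem M f i x) _ (Psi0_mem M f j y)
  rintro _ ⟨s, hs, rfl⟩ _ ⟨t, ht, rfl⟩
  have : f s ≠ f t := by
    rw [Set.mem_preimage, Set.mem_singleton_iff] at hs ht
    rw [hs, ht]; exact hij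
  exact agen_comm M (hcross s t this)

variable [Fintype α]

variable (hcross : ∀ s t : α, f s ≠ f t → M s t = 2) in
/-- The homomorphism `∏ᵢ A_{Γᵢ} →* A_Γ`. -/
private def Psi : (∀ i, ArtinGroup (Mi M f i)) →* ArtinGroup M :=
  MonoidHom.noncommPiCoprod (Psi0 M f) (Psi_comm M f hcross)

private lemma Psi_single (hcross : ∀ s t : α, f s ≠ f t → M s t = 2) (i : Fin k) (x : ArtinGroup (Mi M f i)) :
    Psi M f hcross (Pi.mulSingle i x) = Psi0 M f i x :=
  MonoidHom.noncommPiCoprod_mulSingle _ _ _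

private lemma Phi_Psi0 (hcross : ∀ s t : α, f s ≠ f t → M s t = 2) (i : Fin k) :
    (Phi M f hcross).comp (Psi0 M f i) =
      MonoidHom.mulSingle (fun i => ArtinGroup (Mi M f i)) i := by
  refine PresentedGroup.ext fun s => ?_
  rw [MonoidHom.comp_apply]
  show Phi M f hcross (Psi0 M f i (agen (Mi M f i) s)) =
    Pi.mulSingle i (PresentedGroup.of s)
  rw [Psi0_agen, Phi_agen, F0_eq M f s.2, Subtype.coe_eta]
  rfl

variable (hcross : ∀ s t : α, f s ≠ f t → M s t = 2) in
/-- The isomorphism `A_Γ ≃* ∏ᵢ A_{Γᵢ}`. -/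
private def E : ArtinGroup M ≃* ∀ i, ArtinGroup (Mi M f i) :=
  MonoidHom.toMulEquiv (Phi M f hcross) (Psi M f hcross)
    (by
      ext s
      rw [MonoidHom.comp_apply]
      show Psi M f hcross (Phi M f hcross (agen M s)) = agen M s
      rw [Phi_agen, F0, Psi_single, Psi0_agen])
    (by
      apply MonoidHom.pi_ext
      intro i x
      rw [MonoidHom.comp_apply, Psi_single, MonoidHom.id_apply,
        ← MonoidHom.comp_apply, Phi_Psi0, MonoidHom.mulSingle_apply])

end Product

end ArtinPaper

namespace ArtinPaper

section Product2

variable {α : Type*} [Fintype α] (M : α → α → ℕ) {k : ℕ} (f : α → Fin k)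
  (hcross : ∀ s t : α, f s ≠ f t → M s t = 2)

private lemma E_coe : ((E M f hcross : ArtinGroup M ≃* ∀ i, ArtinGroup (Mi M f i)) :
    ArtinGroup M →* ∀ i, ArtinGroup (Mi M f i)) = Phi M f hcross := rfl

private lemma map_std (T : Set α) :
    (standardParabolic M T).map (Phi M f hcross) =
      Subgroup.pi Set.univ
        (fun i => standardParabolic (Mi M f i) {x : (f ⁻¹' {i} : Set α) | ↑x ∈ T}) := by
  rw [standardParabolic, MonoidHom.map_closure]
  apply le_antisymm
  · rw [Subgroup.closure_le]
    rintro _ ⟨_, ⟨s, hs, rfl⟩, rfl⟩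
    rw [SetLike.mem_coe, Subgroup.mem_pi]
    intro i _
    rw [Phi_agen]
    by_cases h : f s = i
    · rw [F0_eq M f h, Pi.mulSingle_eq_same]
      exact Subgroup.subset_closure ⟨⟨s, h⟩, hs, rfl⟩
    · rw [F0, Pi.mulSingle_eq_of_ne (Ne.symm h)]
      exact one_mem _
  · intro x hx
    rw [Subgroup.mem_pi] at hx
    rw [← Finset.noncommProd_mulSingle x]
    apply Subgroup.noncommProd_mem
    intro i _
    have h1 : x i ∈ Subgroup.closure
        (agen (Mi M f i) '' {y : (f ⁻¹' {i} : Set α) | ↑y ∈ T}) := hx i trivial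
    have h2 := Subgroup.mem_map_of_mem
      (MonoidHom.mulSingle (fun j => ArtinGroup (Mi M f j)) i) h1
    rw [MonoidHom.map_closure] at h2
    refine Subgroup.closure_mono ?_ h2
    rintro _ ⟨_, ⟨y, hy, rfl⟩, rfl⟩
    refine ⟨agen M ↑y, ⟨↑y, hy, rfl⟩, ?_⟩
    rw [Phi_agen, F0_eq M f y.2, Subtype.coe_eta, MonoidHom.mulSingle_apply]

end Product2

end ArtinPaper

namespace ArtinPaper

theorem satisfiesIP_of_product' {α : Type*} [Fintype α] (M : α → α → ℕ)
    (k : ℕ) (f : α → Fin k)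
    (hcross : ∀ s t : α, f s ≠ f t → M s t = 2)
    (hIP : ∀ (i : Fin k) (T : Set α), T ⊆ f ⁻¹' {i} → SatisfiesIP (restrict M T)) :
    SatisfiesIP M := by
  intro H K hH hK
  obtain ⟨g, T, rfl⟩ := hH
  obtain ⟨h, U, rfl⟩ := hK
  set e := E M f hcross with he
  -- transfer to the product
  have hmain : ∀ (i : Fin k), ∃ (c : ArtinGroup (Mi M f i)) (V : Set (f ⁻¹' {i} : Set α)),
      (conjSub (e g i) (standardParabolic (Mi M f i) {x : (f ⁻¹' {i} : Set α) | ↑x ∈ T}) ⊓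
        conjSub (e h i) (standardParabolic (Mi M f i) {x : (f ⁻¹' {i} : Set α) | ↑x ∈ U})) =
        conjSub c (standardParabolic (Mi M f i) V) := by
    intro i
    exact hIP i (f ⁻¹' {i}) (le_refl _) _ _
      ⟨e g i, _, rfl⟩ ⟨e h i, _, rfl⟩
  choose c V hcV using hmain
  -- the global vertex set
  set W : Set α := ⋃ i, (Subtype.val '' (V i)) with hW
  have hWi : ∀ i : Fin k, {x : (f ⁻¹' {i} : Set α) | ↑x ∈ W} = V i := by
    intro i
    ext x
    simp only [Set.mem_setOf_eq, hW, Set.mem_iUnion, Set.mem_image]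
    constructor
    · rintro ⟨j, y, hy, hyx⟩
      have hji : j = i := by
        have h1 : f ↑y = j := y.2
        have h2 : f ↑x = i := x.2
        rw [← h1, hyx, h2]
      subst hji
      have : y = x := Subtype.ext hyx
      rwa [← this]
    · intro hx
      exact ⟨i, x, hx, rfl⟩
  -- compute the image of the intersection under e
  have himg : (conjSub g (standardParabolic M T) ⊓
      conjSub h (standardParabolic M U)).map e.toMonoidHom =
      (conjSub (e.symm (fun i => c i)) (standardParabolic M W)).map e.toMonoidHom := by
    have hinj : Function.Injective e.toMonoidHom := MulEquiv.injective e
    rw [Subgroup.map_inf _ _ e.toMonoidHom hinj, map_conjSub, map_conjSub, map_conjSub]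
    rw [MulEquiv.apply_symm_apply]
    have hhe : e.toMonoidHom = Phi M f hcross := rfl
    rw [hhe, map_std M f hcross T, map_std M f hcross U, map_std M f hcross W]
    rw [conjSub_pi, conjSub_pi, conjSub_pi, pi_inf]
    congr 1
    funext i
    rw [hcV i, hWi i]
  have := Subgroup.map_injective (f := e.toMonoidHom) (MulEquiv.injective e) himg
  exact ⟨e.symm (fun i => c i), W, this⟩

end ArtinPaper


namespace ArtinPaper

/-- Suppose the vertex set decomposes as a disjoint union of parts
(fibers of `f : α → Fin k`) with any two vertices in different parts joined by an edge
labelled `2`, so `A_Γ ≅ A_{Γ₁} × ⋯ × A_{Γ_k}`. If for every part `Sᵢ` and every subset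
`T ⊆ Sᵢ` the Artin group of the induced subgraph on `T` satisfies the Intersection
Property, then `A_Γ` satisfies the Intersection Property. -/
theorem satisfiesIP_of_product {α : Type*} [Fintype α] (M : α → α → ℕ)
    (hsym : ∀ s t, M s t = M t s) (hdiag : ∀ s, M s s = 0)
    (hlab : ∀ s t, s ≠ t → M s t = 0 ∨ 2 ≤ M s t)
    (k : ℕ) (f : α → Fin k)
    (hcross : ∀ s t : α, f s ≠ f t → M s t = 2)
    (hIP : ∀ (i : Fin k) (T : Set α), T ⊆ f ⁻¹' {i} → SatisfiesIP (restrict M T)) :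
    SatisfiesIP M :=
  satisfiesIP_of_product' M k f hcross hIP

end ArtinPaper
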